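/- arXiv:2401.02067 — 6 statements merged into one kernel-verified Lean document; each statement's English description precedes it below -/
import Mathlib

section
/- Let k be a Brauer field and let K/k be a field extension such that, for every integer d ≥ 1, the quotient group K^× / (k^× · (K^×)^d) is finite. Then K is a Brauer field. Moreover, if that quotient for exponent d has cardinality n and m = N_k(d), then N_K(d) ≤ n·m. -/
/-- `IsBrauerBound k d N` : every diagonal equation of degree `d` in more than `N`
variables over `k` has a nontrivial solution. -/
def IsBrauerBound (k : Type*) [Field k] (d N : ℕ) : Prop :=
  ∀ n : ℕ, N < n → ∀ a : Fin n → k,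
    ∃ x : Fin n → k, x ≠ 0 ∧ ∑ i, a i * x i ^ d = 0

/-- A field `k` is a *Brauer field* if for every `d ≥ 1` there is a Brauer bound. -/
def IsBrauerField (k : Type*) [Field k] : Prop :=
  ∀ d : ℕ, 1 ≤ d → ∃ N : ℕ, IsBrauerBound k d N

/-- `N_k(d)` : the least Brauer bound for degree `d` over `k`. -/
noncomputable def brauerConst (k : Type*) [Field k] (d : ℕ) : ℕ :=
  sInf {N | IsBrauerBound k d N}

/-- The subgroup `k^× · (K^×)^d` of `K^×`. -/
def mixedPowerSubgroup (k K : Type*) [Field k] [Field K] [Algebra k K] (d : ℕ) :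
    Subgroup Kˣ :=
  (Units.map (algebraMap k K).toMonoidHom).range ⊔ (powMonoidHom d : Kˣ →* Kˣ).range

/-!
Let `Q = K^× / (k^× · (K^×)^d)`, of cardinality `n`, and let `m = N_k(d)`. Given a diagonal form
`∑ aᵢ xᵢ^d` over `K` in more than `n·m` variables, we may assume all `aᵢ ≠ 0`. By pigeonhole more
than `m` of the `aᵢ` lie in one class of `Q`, so `aᵢ = b · cᵢ · wᵢ^d` with `cᵢ ∈ k^×` for them.
A nontrivial zero `z` of `∑ cᵢ zᵢ^d` over `k` then gives the zero `xᵢ = zᵢ / wᵢ` of the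
subform, which is extended by `0` to the remaining variables.
-/

open Function

section DiagonalZero

variable {R : Type*} [CommSemiring R] {ι κ : Type*} [Fintype ι] [Fintype κ]

def HasNontrivialDiagonalZero (a : ι → R) (d : ℕ) : Prop :=
  ∃ x : ι → R, x ≠ 0 ∧ ∑ i, a i * x i ^ d = 0

theorem HasNontrivialDiagonalZero.of_comp_injective {a : ι → R} {d : ℕ} (hd : d ≠ 0)
    {g : κ → ι} (hg : Injective g) (h : HasNontrivialDiagonalZero (a ∘ g) d) :
    HasNontrivialDiagonalZero a d := by
  obtain ⟨y, hy, hsum⟩ := h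
  refine ⟨extend g y 0, fun h0 => hy (funext fun j => ?_), ?_⟩
  · simpa [hg.extend_apply] using congr_fun h0 (g j)
  · rw [← hsum]
    refine (Fintype.sum_of_injective g hg _ _ (fun i hi => ?_) (fun j => ?_)).symm
    · simp [extend_apply' _ _ _ hi, hd]
    · simp [hg.extend_apply]

theorem hasNontrivialDiagonalZero_of_eq_zero [Nontrivial R] {a : ι → R} {d : ℕ} (hd : d ≠ 0)
    {i : ι} (hi : a i = 0) : HasNontrivialDiagonalZero a d :=
  HasNontrivialDiagonalZero.of_comp_injective hd (g := fun _ : Unit => i) (fun _ _ _ => rfl)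
    ⟨1, one_ne_zero, by simp [hi]⟩

end DiagonalZero

theorem isBrauerBound_brauerConst {k : Type*} [Field k] {d : ℕ}
    (h : ∃ N, IsBrauerBound k d N) : IsBrauerBound k d (brauerConst k d) :=
  Nat.sInf_mem h

theorem IsBrauerBound.hasNontrivialDiagonalZero {k : Type*} [Field k] {d N : ℕ}
    (h : IsBrauerBound k d N) {ι : Type*} [Fintype ι] (hN : N < Fintype.card ι) (a : ι → k) :
    HasNontrivialDiagonalZero a d := by
  let e := Fintype.equivFin ι
  obtain ⟨x, hx, hsum⟩ := h _ hN (a ∘ e.symm)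
  refine ⟨x ∘ e, fun h0 => hx ?_, ?_⟩
  · funext i
    simpa using congr_fun h0 (e.symm i)
  · rw [← hsum]
    exact Fintype.sum_equiv e _ _ (by simp)

theorem HasNontrivialDiagonalZero.of_eq_mul_algebraMap_mul_pow {k K : Type*} [Field k] [Field K]
    [Algebra k K] {ι : Type*} [Fintype ι] {c : ι → k} {d : ℕ}
    (h : HasNontrivialDiagonalZero c d) (b : K) {a w : ι → K} (hw : ∀ i, w i ≠ 0)
    (ha : ∀ i, a i = b * algebraMap k K (c i) * w i ^ d) : HasNontrivialDiagonalZero a d := by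
  obtain ⟨z, hz, hsum⟩ := h
  refine ⟨fun i => algebraMap k K (z i) / w i, fun h0 => ?_, ?_⟩
  · obtain ⟨i, hi⟩ := ne_iff.mp hz
    have := congr_fun h0 i
    simp_all
  · calc ∑ i, a i * (algebraMap k K (z i) / w i) ^ d
        = ∑ i, b * algebraMap k K (c i * z i ^ d) := by
          refine Finset.sum_congr rfl fun i _ => ?_
          rw [ha i, map_mul, map_pow, div_pow]
          field_simp [hw i]
      _ = 0 := by rw [← Finset.mul_sum, ← map_sum, hsum, map_zero, mul_zero]

section MixedPowerClasses

variable {k K : Type*} [Field k] [Field K] [Algebra k K] {d : ℕ}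

theorem exists_eq_mul_algebraMap_mul_pow_of_mk_eq {u v : Kˣ}
    (h : (u : Kˣ ⧸ mixedPowerSubgroup k K d) = v) :
    ∃ c : k, ∃ w : K, w ≠ 0 ∧ (v : K) = u * algebraMap k K c * w ^ d := by
  obtain ⟨_, ⟨c, rfl⟩, _, ⟨w, rfl⟩, hcw⟩ := Subgroup.mem_sup.mp (QuotientGroup.eq.mp h)
  refine ⟨c, w, w.ne_zero, ?_⟩
  have hv : v = u * (Units.map (algebraMap k K).toMonoidHom c * w ^ d) := by
    rw [← powMonoidHom_apply, hcw, mul_inv_cancel_left]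
  simp [hv, mul_assoc]

theorem IsBrauerBound.card_quotient_mixedPowerSubgroup_mul {m : ℕ} (hd : d ≠ 0)
    (hm : IsBrauerBound k d m) [Finite (Kˣ ⧸ mixedPowerSubgroup k K d)] :
    IsBrauerBound K d (Nat.card (Kˣ ⧸ mixedPowerSubgroup k K d) * m) := by
  intro N hN a
  by_cases hzero : ∃ i, a i = 0
  · obtain ⟨i, hi⟩ := hzero
    exact hasNontrivialDiagonalZero_of_eq_zero hd hi
  push Not at hzero
  classical
  let _ := Fintype.ofFinite (Kˣ ⧸ mixedPowerSubgroup k K d)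
  let u (i : Fin N) : Kˣ := Units.mk0 (a i) (hzero i)
  obtain ⟨q, hq⟩ := Fintype.exists_lt_card_fiber_of_mul_lt_card
    (f := fun i => (u i : Kˣ ⧸ mixedPowerSubgroup k K d))
    (by simpa [Nat.card_eq_fintype_card] using hN)
  have hfiber : m < Fintype.card {i // (u i : Kˣ ⧸ mixedPowerSubgroup k K d) = q} := by
    rwa [Fintype.card_subtype]
  obtain ⟨i₀, hi₀⟩ := Fintype.card_pos_iff.mp (m.zero_le.trans_lt hfiber)
  choose c w hw hcw using fun i : {i // (u i : Kˣ ⧸ mixedPowerSubgroup k K d) = q} =>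
    exists_eq_mul_algebraMap_mul_pow_of_mk_eq (hi₀.trans i.2.symm)
  exact ((hm.hasNontrivialDiagonalZero hfiber c).of_eq_mul_algebraMap_mul_pow (a i₀) hw
    hcw).of_comp_injective hd Subtype.val_injective

end MixedPowerClasses

/-- If `k` is a Brauer field and `K/k` is a field extension with
`K^×/(k^× · (K^×)^d)` finite for every `d ≥ 1`, then `K` is a Brauer field; moreover, if
that quotient for exponent `d` has cardinality `n` and `m = N_k(d)`, then `N_K(d) ≤ n·m`. -/
theorem isBrauerField_of_finite_mixed_power_classes (k K : Type*) [Field k] [Field K]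
    [Algebra k K] (hk : IsBrauerField k)
    (hfin : ∀ d : ℕ, 1 ≤ d → Finite (Kˣ ⧸ mixedPowerSubgroup k K d)) :
    IsBrauerField K ∧
      ∀ d : ℕ, 1 ≤ d →
        IsBrauerBound K d (Nat.card (Kˣ ⧸ mixedPowerSubgroup k K d) * brauerConst k d) := by
  have hbound : ∀ d : ℕ, 1 ≤ d →
      IsBrauerBound K d (Nat.card (Kˣ ⧸ mixedPowerSubgroup k K d) * brauerConst k d) :=
    fun d hd =>
      have := hfin d hd
      (isBrauerBound_brauerConst (hk d hd)).card_quotient_mixedPowerSubgroup_mul (by omega)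
  exact ⟨fun d hd => ⟨_, hbound d hd⟩, hbound⟩
end

section
/- Let k be a Brauer field of characteristic p > 0. Then [k : k^p] ≤ N_k(p); in particular [k : k^{p^n}] is finite for every n ≥ 1, i.e., k is semi-perfect. -/
theorem Subfield.rank_le_of_isBrauerBound {k : Type*} [Field k] {d N : ℕ}
    (hN : IsBrauerBound k d N) (K : Subfield k) (hK : ∀ x : k, x ^ d ∈ K) :
    Module.rank K k ≤ N := by
  by_contra! hlt
  obtain ⟨a, ha⟩ := exists_linearIndependent_of_le_rank (n := N + 1)
    (by simpa [← Cardinal.succ_natCast] using Order.succ_le_of_lt hlt)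
  obtain ⟨x, hx, hsum⟩ := hN (N + 1) N.lt_succ_self a
  have hcoeff : ∀ i, x i ^ d = 0 := fun i =>
    congrArg Subtype.val <| Fintype.linearIndependent_iff.mp ha (fun i => ⟨x i ^ d, hK (x i)⟩)
      (by simpa [Subfield.smul_def, mul_comm] using hsum) i
  exact hx (funext fun i => eq_zero_of_pow_eq_zero (hcoeff i))

theorem IsBrauerField.finiteDimensional_of_pow_mem {k : Type*} [Field k]
    (hk : IsBrauerField k) {d : ℕ} (hd : 1 ≤ d) (K : Subfield k) (hK : ∀ x : k, x ^ d ∈ K) :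
    FiniteDimensional K k := by
  obtain ⟨N, hN⟩ := hk d hd
  exact Module.rank_lt_aleph0_iff.mp
    ((K.rank_le_of_isBrauerBound hN hK).trans_lt Cardinal.natCast_lt_aleph0)

/-- A Brauer field `k` of characteristic `p > 0` satisfies `[k : k^p] ≤ N_k(p)`; in
particular `[k : k^{p^n}]` is finite for every `n ≥ 1`, i.e. `k` is semi-perfect. -/
theorem brauerField_semiperfect (k : Type*) [Field k] (p : ℕ) [Fact p.Prime] [CharP k p]
    (hk : IsBrauerField k) :
    Module.rank ((frobenius k p).fieldRange) k ≤ (brauerConst k p : Cardinal) ∧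
      ∀ n : ℕ, 1 ≤ n → FiniteDimensional ((iterateFrobenius k p n).fieldRange) k := by
  have hp : 0 < p := (Fact.out : p.Prime).pos
  refine ⟨?_, fun n _ => ?_⟩
  · exact (frobenius k p).fieldRange.rank_le_of_isBrauerBound (Nat.sInf_mem (hk p hp))
      fun x => ⟨x, rfl⟩
  · exact hk.finiteDimensional_of_pow_mem (Nat.one_le_pow n p hp) _ fun x => ⟨x, rfl⟩
end

section
/- Let k be an infinite field and let d > 0 be an integer that is not a multiple of the characteristic of k. Then the diagonal form f = a_1 x_1^d + ... + a_n x_n^d in n variables, with all coefficients a_1, ..., a_n ∈ k nonzero, has strength at least n/2: if f = g_1 h_1 + ... + g_s h_s with all g_i, h_i homogeneous polynomials of degrees strictly between 0 and d, then 2s ≥ n. -/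
/-!
Let `I` be the ideal generated by the `2s` forms `gᵢ, hᵢ`. Since `f ∈ I²`, the Leibniz rule puts
every partial derivative `d aⱼ xⱼ^(d-1)` of `f` in `I`; as `d aⱼ ≠ 0`, every prime containing `I`
contains all the variables. The forms have positive degree, so `I` lies in the maximal ideal `𝔪`
of the origin, which is therefore a minimal prime of `I`. Krull's height theorem now gives
`n = ht 𝔪 ≤ 2s`.
-/

open MvPolynomial

theorem Ideal.height_le_card_of_mem_minimalPrimes_span_range {R ι : Type*} [CommRing R]
    [IsNoetherianRing R] [Finite ι] {v : ι → R} {p : Ideal R}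
    (hp : p ∈ (Ideal.span (Set.range v)).minimalPrimes) : p.height ≤ Nat.card ι := by
  refine (Ideal.height_le_card_of_mem_minimalPrimes_span (Set.finite_range v) hp).trans ?_
  rw [← Nat.card_coe_set_eq]
  exact_mod_cast Finite.card_range_le v

namespace MvPolynomial

theorem height_ker_eval {k : Type*} [Field k] {n : ℕ} (x : Fin n → k) :
    (RingHom.ker (eval x : MvPolynomial (Fin n) k →+* k)).height = n := by
  induction n with
  | zero =>
    suffices RingHom.ker (eval x : MvPolynomial (Fin 0) k →+* k) = ⊥ by
      simp [this]
    refine (RingHom.injective_iff_ker_eq_bot _).mp fun p q hpq => ?_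
    rw [eq_C_of_isEmpty p, eq_C_of_isEmpty q] at hpq ⊢
    simpa using hpq
  | succ n ih =>
    let ψ := Polynomial.eval₂RingHom (eval (Fin.tail x)) (x 0)
    have hψ : ψ.comp (finSuccEquiv k n).toRingEquiv = eval x := by
      ext i
      · simp [ψ, finSuccEquiv_apply]
      · cases i using Fin.cases <;> simp [ψ, finSuccEquiv_X_zero, finSuccEquiv_X_succ, Fin.tail]
    have : (RingHom.ker ψ).IsMaximal := RingHom.ker_isMaximal_of_surjective ψ fun r =>
      ⟨Polynomial.C (C r), by simp [ψ]⟩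
    have : (RingHom.ker ψ).LiesOver (RingHom.ker (eval (Fin.tail x))) := by
      constructor
      rw [Ideal.under, RingHom.comap_ker]
      congr 1
      ext <;> simp [ψ]
    rw [← hψ, ← RingHom.comap_ker, Ideal.comap_coe, RingEquiv.height_comap,
      Polynomial.height_eq_height_add_one (RingHom.ker (eval (Fin.tail x))), ih]
    norm_cast

section

variable {σ R : Type*} [CommRing R]

theorem ker_eval_zero_le {I : Ideal (MvPolynomial σ R)} (hI : ∀ i, X i ∈ I) :
    RingHom.ker (eval 0 : MvPolynomial σ R →+* R) ≤ I := by
  intro p hp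
  have hspan : p ∈ Ideal.span (X '' Set.univ) := by
    rw [mem_ideal_span_X_image]
    intro m hm
    have hm0 : m ≠ 0 := by
      rintro rfl
      rw [RingHom.mem_ker, eval_zero] at hp
      exact mem_support_iff.mp hm hp
    obtain ⟨i, hi⟩ := Finsupp.ne_iff.mp hm0
    exact ⟨i, Set.mem_univ i, hi⟩
  exact Ideal.span_le.mpr (by rintro _ ⟨i, -, rfl⟩; exact hI i) hspan

theorem ker_eval_zero_mem_minimalPrimes [IsDomain R] {I : Ideal (MvPolynomial σ R)}
    (hI : I ≤ RingHom.ker (eval 0)) (hpow : ∀ i, ∃ m, X i ^ m ∈ I) :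
    RingHom.ker (eval 0 : MvPolynomial σ R →+* R) ∈ I.minimalPrimes :=
  ⟨⟨RingHom.ker_isPrime _, hI⟩, fun _ ⟨hq, hIq⟩ _ => ker_eval_zero_le fun i =>
    (hpow i).elim fun _ hm => hq.mem_of_pow_mem _ (hIq hm)⟩

theorem IsHomogeneous.eval_zero {p : MvPolynomial σ R} {m : ℕ}
    (hp : p.IsHomogeneous m) (hm : m ≠ 0) : eval 0 p = 0 := by
  rw [MvPolynomial.eval_zero, constantCoeff_eq]
  exact hp.coeff_eq_zero (by simpa using hm.symm)

theorem pderiv_mem_of_mem_sq {I : Ideal (MvPolynomial σ R)} {p : MvPolynomial σ R}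
    (hp : p ∈ I ^ 2) (i : σ) : pderiv i p ∈ I := by
  rw [sq] at hp
  refine Submodule.mul_induction_on hp (fun x hx y hy => ?_) (fun x y hx hy => ?_)
  · rw [Derivation.leibniz]
    exact add_mem (I.mul_mem_right _ hx) (I.mul_mem_right _ hy)
  · rw [map_add]; exact add_mem hx hy

theorem pderiv_sum_C_mul_X_pow [Fintype σ] [DecidableEq σ] (a : σ → R) (d : ℕ) (j : σ) :
    pderiv j (∑ i, C (a i) * X i ^ d) = C (d * a j) * X j ^ (d - 1) := by
  rw [map_sum, Finset.sum_eq_single j]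
  · simp [mul_assoc, mul_left_comm]
  · intro i _ hij
    simp [Pi.single_eq_of_ne hij]
  · simp

end

theorem X_pow_pred_mem_of_sum_C_mul_X_pow_mem_sq {σ k : Type*} [Field k] [Fintype σ]
    [DecidableEq σ] {I : Ideal (MvPolynomial σ k)} {a : σ → k} {d : ℕ} (hd : (d : k) ≠ 0)
    (hf : ∑ i, C (a i) * X i ^ d ∈ I ^ 2) {j : σ} (ha : a j ≠ 0) : X j ^ (d - 1) ∈ I := by
  have hderiv := pderiv_mem_of_mem_sq hf j
  rwa [pderiv_sum_C_mul_X_pow, I.unit_mul_mem_iff_mem ((mul_ne_zero hd ha).isUnit.map C)]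
    at hderiv

end MvPolynomial

theorem diagonal_strength_general (k : Type*) [Field k] (d : ℕ)
    (hchar : ¬ (ringChar k ∣ d)) (n s : ℕ) (a : Fin n → k) (ha : ∀ i, a i ≠ 0)
    (g h : Fin s → MvPolynomial (Fin n) k) (dg dh : Fin s → ℕ)
    (hg : ∀ i, 0 < dg i ∧ dg i < d ∧ (g i).IsHomogeneous (dg i))
    (hh : ∀ i, 0 < dh i ∧ dh i < d ∧ (h i).IsHomogeneous (dh i))
    (heq : (∑ i : Fin n, C (a i) * X i ^ d) = ∑ i : Fin s, g i * h i) :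
    n ≤ 2 * s := by
  set I := Ideal.span (Set.range (Sum.elim g h))
  have hd : (d : k) ≠ 0 := (ringChar.spec k d).not.mpr hchar
  have hf : ∑ i, C (a i) * X i ^ d ∈ I ^ 2 := by
    rw [heq, sq]
    exact Ideal.sum_mem _ fun i _ =>
      Ideal.mul_mem_mul (Ideal.subset_span ⟨.inl i, rfl⟩) (Ideal.subset_span ⟨.inr i, rfl⟩)
  have hI : I ≤ RingHom.ker (eval 0) := Ideal.span_le.mpr <| Set.range_subset_iff.mpr fun
    | .inl i => (hg i).2.2.eval_zero (hg i).1.ne'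
    | .inr i => (hh i).2.2.eval_zero (hh i).1.ne'
  have hmin := ker_eval_zero_mem_minimalPrimes hI fun j =>
    ⟨d - 1, X_pow_pred_mem_of_sum_C_mul_X_pow_mem_sq hd hf (ha j)⟩
  have hheight := Ideal.height_le_card_of_mem_minimalPrimes_span_range hmin
  rw [height_ker_eval, Nat.card_sum, Nat.card_eq_fintype_card, Fintype.card_fin, ← two_mul]
    at hheight
  exact_mod_cast hheight

/-- Over an infinite field `k`, if `d > 0` is not a multiple of the characteristic, then a
diagonal form `a_1 x_1^d + ⋯ + a_n x_n^d` with all `a_i ≠ 0` has strength at least `n/2`: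
any expression of it as a sum of `s` products of pairs of homogeneous polynomials of
degrees strictly between `0` and `d` forces `2s ≥ n`. -/
theorem diagonal_strength (k : Type*) [Field k] [Infinite k] (d : ℕ) (hd : 0 < d)
    (hchar : ¬ (ringChar k ∣ d)) (n s : ℕ) (a : Fin n → k) (ha : ∀ i, a i ≠ 0)
    (g h : Fin s → MvPolynomial (Fin n) k) (dg dh : Fin s → ℕ)
    (hg : ∀ i, 0 < dg i ∧ dg i < d ∧ (g i).IsHomogeneous (dg i))
    (hh : ∀ i, 0 < dh i ∧ dh i < d ∧ (h i).IsHomogeneous (dh i))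
    (heq : (∑ i : Fin n, C (a i) * X i ^ d) = ∑ i : Fin s, g i * h i) :
    n ≤ 2 * s :=
  diagonal_strength_general k d hchar n s a ha g h dg dh hg hh heq
end

section
/- Let p be a prime, let k = F_p(t_1, t_2, ...) be the field of rational functions over F_p in countably many algebraically independent variables, and let n ≥ 1. Then the polynomial f = t_1 x_1^p + ... + t_n x_n^p ∈ k[x_1, ..., x_n] has strength at least n/2 over k: if f = g_1 h_1 + ... + g_s h_s with all g_i, h_i ∈ k[x_1, ..., x_n] homogeneous of degrees strictly between 0 and p, then 2s ≥ n. -/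
/-!
Apply to `f = ∑ gᵢ hᵢ` the derivation `∂/∂t_j` of `k`, coefficientwise: the left side becomes
`x_j ^ p` and the right side lies in the ideal `I = (g₁, …, g_s, h₁, …, h_s)`. Hence the
`2s` forms generating `I`, all of positive degree, have the irrelevant ideal `(x₁, …, xₙ)`,
of height `n`, as their only minimal prime, and Krull's height theorem gives `n ≤ 2s`.
-/

open MvPolynomial DualNumber TrivSqZeroExt

theorem DualNumber.snd_mem_of_mem_mul {A : Type*} [CommRing A] (Φ : A →+* A[ε])
    (hΦ : ∀ a, (Φ a).fst = a) {I : Ideal A} {x : A} (hx : x ∈ I * I) : (Φ x).snd ∈ I := by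
  -- `snd ∘ Φ` is a derivation of `A`
  refine Submodule.mul_induction_on hx (fun a ha b hb => ?_) (fun x y hx hy => ?_)
  · rw [map_mul, DualNumber.snd_mul, hΦ, hΦ]
    exact I.add_mem (I.mul_mem_right _ ha) (I.mul_mem_left _ hb)
  · rw [map_add, snd_add]
    exact I.add_mem hx hy

namespace MvPolynomial

theorem idealOfVars_eq_ker_constantCoeff (σ R : Type*) [CommSemiring R] :
    idealOfVars σ R = RingHom.ker (constantCoeff (σ := σ) (R := R)) := by
  ext f
  rw [← pow_one (idealOfVars σ R), mem_pow_idealOfVars_iff', RingHom.mem_ker, constantCoeff_eq]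
  simp [Finsupp.degree_eq_zero_iff]

theorem height_ker_constantCoeff (K : Type*) [Field K] (n : ℕ) :
    (RingHom.ker (constantCoeff (σ := Fin n) (R := K))).height = n := by
  induction n with
  | zero =>
    rw [Nat.cast_zero, Ideal.height_eq_zero_iff_eq_bot, RingHom.ker_eq_bot_iff_eq_zero]
    intro f hf
    rw [eq_C_of_isEmpty f, constantCoeff_C] at hf
    rw [eq_C_of_isEmpty f, hf, C_0]
  | succ n ih =>
    -- In `K[x₁, …, xₙ][x₀]` the ideal becomes a maximal ideal `P` over the one for `n`, and
    -- `Polynomial.height_eq_height_add_one` adds exactly one to the height.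
    let e := (finSuccEquiv K n).toRingEquiv
    let P := RingHom.ker ((constantCoeff (σ := Fin (n + 1)) (R := K)).comp e.symm.toRingHom)
    have hcomap : P.comap e = RingHom.ker constantCoeff := by
      rw [← Ideal.comap_coe, RingHom.comap_ker]; congr 1; ext f <;> simp
    have hunder : P.under (MvPolynomial (Fin n) K) = RingHom.ker constantCoeff := by
      rw [Ideal.under, RingHom.comap_ker]
      congr 1
      ext f
      · have hC := RingHom.congr_fun (finSuccEquiv_comp_C_eq_C (R := K) n) f
        simp only [RingHom.comp_apply, RingHom.coe_coe] at hC
        simp [e, hC]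
      · simp [e, ← finSuccEquiv_X_succ]
    have : P.IsMaximal := RingHom.ker_isMaximal_of_surjective _
      fun a => ⟨e (C a), by simp⟩
    rw [← hcomap, RingEquiv.height_comap, Polynomial.height_eq_height_add_one (P.under _) P, hunder,
      ih]
    norm_cast

theorem IsHomogeneous.constantCoeff_eq_zero {σ R : Type*} [CommSemiring R] {φ : MvPolynomial σ R}
    {d : ℕ} (hφ : φ.IsHomogeneous d) (hd : d ≠ 0) : constantCoeff φ = 0 := by
  rw [constantCoeff_eq]
  exact hφ.coeff_eq_zero (by simpa using hd.symm)

theorem le_card_of_X_mem_radical_span {K : Type*} [Field K] {n : ℕ} {ι : Type*} [Finite ι]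
    (F : ι → MvPolynomial (Fin n) K) (hF : ∀ i, constantCoeff (F i) = 0)
    (hX : ∀ j, X j ∈ (Ideal.span (Set.range F)).radical) : n ≤ Nat.card ι := by
  set I := Ideal.span (Set.range F)
  have hprime := RingHom.ker_isPrime (constantCoeff (σ := Fin n) (R := K))
  have hrad : I.radical = RingHom.ker constantCoeff := le_antisymm
    (hprime.radical_le_iff.2 (Ideal.span_le.2 (Set.range_subset_iff.2 hF)))
    (idealOfVars_eq_ker_constantCoeff (Fin n) K ▸ Ideal.span_le.2 (Set.range_subset_iff.2 hX))
  have hmin : RingHom.ker constantCoeff ∈ I.minimalPrimes := by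
    rw [← Ideal.radical_minimalPrimes, hrad, Ideal.minimalPrimes_eq_subsingleton_self]
    rfl
  have hheight := Ideal.height_le_card_of_mem_minimalPrimes_span (Set.finite_range F) hmin
  rw [height_ker_constantCoeff, ← Nat.card_coe_set_eq] at hheight
  exact_mod_cast hheight.trans (Nat.cast_le.2 (Finite.card_range_le F))

section DualPderiv

variable {k τ σ : Type*} [CommRing k] [DecidableEq τ]

local notation "K" => FractionRing (MvPolynomial τ k)

-- `t_i ↦ t_i + δᵢⱼ ε`: the `ε`-component of a ring map of this shape is a derivation, here
-- `∂/∂t_j`, so the Leibniz rule comes for free.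
variable (σ) in
noncomputable def dualPderivCoeff (j : τ) : MvPolynomial τ k →+* (MvPolynomial σ K)[ε] :=
  eval₂Hom ((inlHom _ _).comp (C.comp ((algebraMap (MvPolynomial τ k) K).comp C)))
    fun i => inl (C (algebraMap (MvPolynomial τ k) K (X i))) + inr (if i = j then 1 else 0)

theorem fst_dualPderivCoeff (j : τ) (a : MvPolynomial τ k) :
    (dualPderivCoeff σ j a).fst = C (algebraMap _ K a) := by
  induction a using MvPolynomial.induction_on with
  | C c => simp [dualPderivCoeff]
  | add a b ha hb => simp [ha, hb]
  | mul_X a i ha =>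
    rw [map_mul, fst_mul, ha, dualPderivCoeff, eval₂Hom_X', fst_add, fst_inl, fst_inr, add_zero,
      map_mul, map_mul]

variable (σ) in
noncomputable def dualPderivFrac (j : τ) : K →+* (MvPolynomial σ K)[ε] :=
  IsLocalization.lift (M := nonZeroDivisors (MvPolynomial τ k)) (g := dualPderivCoeff σ j)
    fun a => isUnit_iff_isUnit_fst.2 <| by
      rw [fst_dualPderivCoeff]
      exact (IsLocalization.map_units K a).map C

theorem dualPderivFrac_algebraMap (j : τ) (a : MvPolynomial τ k) :
    dualPderivFrac σ j (algebraMap _ K a) = dualPderivCoeff σ j a :=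
  IsLocalization.lift_eq _ a

theorem fst_dualPderivFrac (j : τ) (c : K) : (dualPderivFrac σ j c).fst = C c := by
  let fstRingHom : (MvPolynomial σ K)[ε] →+* MvPolynomial σ K :=
    fstHom (MvPolynomial σ K) (MvPolynomial σ K) (MvPolynomial σ K)
  change (fstRingHom.comp (dualPderivFrac σ j)) c = C c
  congr 1
  refine IsLocalization.ringHom_ext (nonZeroDivisors (MvPolynomial τ k)) (RingHom.ext fun a => ?_)
  simp [fstRingHom, dualPderivFrac_algebraMap, fst_dualPderivCoeff]

noncomputable def dualPderiv (j : τ) : MvPolynomial σ K →+* (MvPolynomial σ K)[ε] :=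
  eval₂Hom (dualPderivFrac σ j) fun i => inl (X i)

theorem fst_dualPderiv (j : τ) (f : MvPolynomial σ K) : (dualPderiv j f).fst = f := by
  induction f using MvPolynomial.induction_on with
  | C c => simp [dualPderiv, fst_dualPderivFrac]
  | add f g hf hg => simp [hf, hg]
  | mul_X f i hf => rw [map_mul, fst_mul, hf]; simp [dualPderiv]

theorem snd_dualPderiv_C_mul (j i : τ) (x : σ) (e : ℕ) :
    (dualPderiv j (C (algebraMap _ K (X i : MvPolynomial τ k)) * X x ^ e)).snd =
      if i = j then X x ^ e else 0 := by
  split_ifs <;> simp [dualPderiv, dualPderivFrac_algebraMap, dualPderivCoeff, *]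

variable [Fintype σ]

theorem snd_dualPderiv_sum_C_mul_X_pow {v : σ → τ} (hv : Function.Injective v) (x : σ) (e : ℕ) :
    (dualPderiv (v x) (∑ y, C (algebraMap _ K (X (v y) : MvPolynomial τ k)) * X y ^ e)).snd =
      X x ^ e := by
  rw [map_sum, snd_sum, Finset.sum_eq_single x, snd_dualPderiv_C_mul, if_pos rfl]
  · exact fun y _ hy => by rw [snd_dualPderiv_C_mul, if_neg (hv.ne hy)]
  · exact fun hx => absurd (Finset.mem_univ x) hx

end DualPderiv

end MvPolynomial

theorem diagonal_frobenius_strength_general (p : ℕ) [Fact p.Prime] (n : ℕ) (s : ℕ)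
    (g h : Fin s → MvPolynomial (Fin n) (FractionRing (MvPolynomial ℕ (ZMod p))))
    (dg dh : Fin s → ℕ)
    (hg : ∀ i, 0 < dg i ∧ dg i < p ∧ (g i).IsHomogeneous (dg i))
    (hh : ∀ i, 0 < dh i ∧ dh i < p ∧ (h i).IsHomogeneous (dh i))
    (heq : (∑ i : Fin n,
        C (algebraMap (MvPolynomial ℕ (ZMod p)) (FractionRing (MvPolynomial ℕ (ZMod p)))
            (X (i : ℕ))) * X i ^ p)
      = ∑ i : Fin s, g i * h i) :
    n ≤ 2 * s := by
  let I := Ideal.span (Set.range (Sum.elim g h))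
  have hF : ∀ i, constantCoeff (Sum.elim g h i) = 0 := by
    rintro (i | i)
    exacts [(hg i).2.2.constantCoeff_eq_zero (hg i).1.ne',
      (hh i).2.2.constantCoeff_eq_zero (hh i).1.ne']
  have hsq : ∑ i, g i * h i ∈ I * I := Ideal.sum_mem _ fun i _ =>
    Ideal.mul_mem_mul (Ideal.subset_span ⟨.inl i, rfl⟩) (Ideal.subset_span ⟨.inr i, rfl⟩)
  have hX (j : Fin n) : X j ^ p ∈ I := by
    have := snd_mem_of_mem_mul (dualPderiv (j : ℕ)) (fst_dualPderiv _) hsq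
    rwa [← heq, snd_dualPderiv_sum_C_mul_X_pow Fin.val_injective] at this
  simpa [two_mul] using le_card_of_X_mem_radical_span _ hF fun j => ⟨p, hX j⟩

/-- Let `p` be a prime and `k = F_p(t_1, t_2, …)` the field of rational functions over
`F_p` in countably many variables. Then `f = t_1 x_1^p + ⋯ + t_n x_n^p` has strength at
least `n/2` over `k` : any expression of `f` as a sum of `s` products of pairs of
homogeneous polynomials of degrees strictly between `0` and `p` forces `2s ≥ n`. -/
theorem diagonal_frobenius_strength (p : ℕ) [Fact p.Prime] (n : ℕ) (hn : 1 ≤ n) (s : ℕ)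
    (g h : Fin s → MvPolynomial (Fin n) (FractionRing (MvPolynomial ℕ (ZMod p))))
    (dg dh : Fin s → ℕ)
    (hg : ∀ i, 0 < dg i ∧ dg i < p ∧ (g i).IsHomogeneous (dg i))
    (hh : ∀ i, 0 < dh i ∧ dh i < p ∧ (h i).IsHomogeneous (dh i))
    (heq : (∑ i : Fin n,
        C (algebraMap (MvPolynomial ℕ (ZMod p)) (FractionRing (MvPolynomial ℕ (ZMod p)))
            (X (i : ℕ))) * X i ^ p)
      = ∑ i : Fin s, g i * h i) :
    n ≤ 2 * s :=
  diagonal_frobenius_strength_general p n s g h dg dh hg hh heq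
end

section
/- Let k be an infinite field, let d = (d_1, ..., d_r) be a multi-degree, and let Φ be any function from the set of multi-degrees to the natural numbers. Then there exists s ∈ ℕ, depending only on d, Φ, and k, with the following property: for every finite-dimensional k-vector space V and every tuple f = (f_1, ..., f_r) of homogeneous polynomial functions on V of degrees d_1, ..., d_r, there exist a multi-degree e ≤ d (in the lexicographic order) of length at most s and a tuple g of homogeneous polynomial functions on V of degrees given by e such that str(g) > Φ(e) and each f_i belongs to the k-subalgebra generated by the entries of g. -/
open MvPolynomial

/-- A *multi-degree* : a tuple `d_1 ≥ d_2 ≥ ⋯ ≥ d_r ≥ 1` of integers. -/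
structure MultiDegree where
  len : ℕ
  d : Fin len → ℕ
  anti : Antitone d
  pos : ∀ i, 1 ≤ d i

/-- A multi-degree as an eventually-zero function `ℕ → ℕ` (padding by zeros). -/
def MultiDegree.toFun (e : MultiDegree) : ℕ → ℕ :=
  fun i => if h : i < e.len then e.d ⟨i, h⟩ else 0

/-- Lexicographic comparison of multi-degrees (of possibly different lengths). -/
def MultiDegree.le (e f : MultiDegree) : Prop :=
  e.toFun = f.toFun ∨
    ∃ i : ℕ, (∀ j, j < i → e.toFun j = f.toFun j) ∧ e.toFun i < f.toFun i

/-- `HasStrengthDecomp f d s` : `f` (of degree `d`) is a sum of `s` products of pairs of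
homogeneous polynomials of degrees strictly between `0` and `d`. -/
def HasStrengthDecomp {σ : Type*} {k : Type*} [Field k]
    (f : MvPolynomial σ k) (d : ℕ) (s : ℕ) : Prop :=
  ∃ (g h : Fin s → MvPolynomial σ k) (a b : Fin s → ℕ),
    (∀ i, 0 < a i ∧ a i < d ∧ 0 < b i ∧ b i < d ∧
      (g i).IsHomogeneous (a i) ∧ (h i).IsHomogeneous (b i)) ∧
    f = ∑ i, g i * h i

/-- The strength of a homogeneous polynomial `f` of degree `d`, as an extended natural
number (`∞` if no decomposition exists). -/
noncomputable def strength {σ k : Type*} [Field k] (f : MvPolynomial σ k) (d : ℕ) : ℕ∞ :=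
  sInf {s : ℕ∞ | ∃ m : ℕ, s = m ∧ HasStrengthDecomp f d m}

/-- The strength of a tuple of homogeneous polynomials of degrees `d i` : the minimal
strength of a nontrivial `k`-linear combination of entries of equal degree
(`∞` for the empty tuple). -/
noncomputable def tupleStrength {σ k : Type*} [Field k] {r : ℕ}
    (f : Fin r → MvPolynomial σ k) (d : Fin r → ℕ) : ℕ∞ :=
  sInf {s : ℕ∞ | ∃ (c : Fin r → k) (e : ℕ), c ≠ 0 ∧ (∀ i, c i ≠ 0 → d i = e) ∧
    s = strength (∑ i, C (c i) * f i) e}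

/-!
Induct on `D` along the Dershowitz–Manna order on its multiset of degrees. If `f` already has
strength `> Φ(D)` it is its own regularization. Otherwise some nontrivial combination `∑ cᵢ fᵢ`
of entries of one degree `e` is a sum of at most `Φ(D)` products `Gⱼ Hⱼ` of lower degrees, and
solving it for an `f_{i₀}` with `c_{i₀} ≠ 0` shows that `f` lies in the algebra generated by the
tuple in which `f_{i₀}` is replaced by the `Gⱼ` and `Hⱼ`. That tuple has a multi-degree below `D`
in both orders, and only finitely many multi-degrees arise in this way from `D`, so the bounds
that the induction hypothesis provides for them have a common maximum.
-/

theorem Nat.lt_card_filter_range_iff {p : ℕ → Prop} [DecidablePred p] (hp : Antitone p)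
    {L : ℕ} (hL : ∀ i, p i → i < L) (j : ℕ) :
    j < ({i ∈ Finset.range L | p i} : Finset ℕ).card ↔ p j := by
  constructor
  · intro hj
    by_contra hpj
    have hsub : {i ∈ Finset.range L | p i} ⊆ Finset.range j := fun i hi => by
      simp only [Finset.mem_filter, Finset.mem_range] at hi ⊢
      by_contra hij
      exact hpj (hp (not_lt.mp hij) hi.2)
    have := Finset.card_le_card hsub
    simp only [Finset.card_range] at this
    omega
  · intro hpj
    have hsub : Finset.range (j + 1) ⊆ {i ∈ Finset.range L | p i} := fun i hi => by
      have hpi : p i := hp (Nat.lt_succ_iff.mp (Finset.mem_range.mp hi)) hpj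
      exact Finset.mem_filter.mpr ⟨Finset.mem_range.mpr (hL i hpi), hpi⟩
    have := Finset.card_le_card hsub
    simp only [Finset.card_range] at this
    omega

theorem Submodule.mem_of_sum_smul_mem {K M ι : Type*} [DivisionRing K] [AddCommGroup M]
    [Module K M] [Fintype ι] [DecidableEq ι] (p : Submodule K M) {c : ι → K} {v : ι → M} {i₀ : ι}
    (hi₀ : c i₀ ≠ 0) (hsum : ∑ i, c i • v i ∈ p) (hv : ∀ i, i ≠ i₀ → v i ∈ p) : v i₀ ∈ p := by
  rw [← Finset.add_sum_erase _ _ (Finset.mem_univ i₀)] at hsum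
  have hrest : ∑ i ∈ Finset.univ.erase i₀, c i • v i ∈ p :=
    p.sum_mem fun i hi => p.smul_mem _ (hv i (Finset.ne_of_mem_erase hi))
  have := p.sub_mem hsum hrest
  rwa [add_sub_cancel_right, p.smul_mem_iff hi₀] at this

theorem Finset.univ_val_map_eq_cons {α β : Type*} [Fintype α] [DecidableEq α] (f : α → β)
    (a : α) : univ.val.map f = f a ::ₘ univ.val.map (fun b : {b // b ≠ a} => f b) := by
  rw [show (fun b : {b // b ≠ a} => f b) = Subtype.restrict (· ≠ a) f from rfl,
    univ_val_map_subtype_restrict, filter_ne', ← Multiset.map_cons,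
    erase_val, Multiset.cons_erase (mem_univ a)]

theorem Finset.univ_val_map_sum {α β γ : Type*} [Fintype α] [Fintype β] (f : α ⊕ β → γ) :
    (univ : Finset (α ⊕ β)).val.map f =
      univ.val.map (fun a => f (.inl a)) + univ.val.map (fun b => f (.inr b)) := by
  rw [← univ_disjSum_univ]
  exact Multiset.map_disjSum f

theorem ENat.exists_mem_le_of_sInf_le {s : Set ℕ∞} {t : ℕ} (h : sInf s ≤ t) :
    ∃ x ∈ s, x ≤ t := by
  rcases s.eq_empty_or_nonempty with rfl | hs
  · simp at h
  · exact ⟨sInf s, csInf_mem hs, h⟩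

namespace Multiset

variable {α : Type*}

def ReplacesPart [Preorder α] (m : ℕ) (A B : Multiset α) : Prop :=
  ∃ e Z Y, B = e ::ₘ Z ∧ A = Z + Y ∧ card Y ≤ m ∧ ∀ y ∈ Y, y < e

namespace ReplacesPart

variable {m : ℕ} {A B : Multiset α}

theorem isDershowitzMannaLT [Preorder α] (h : ReplacesPart m A B) :
    IsDershowitzMannaLT A B := by
  obtain ⟨e, Z, Y, rfl, rfl, -, hY⟩ := h
  exact ⟨Z, Y, {e}, singleton_ne_zero e, rfl, by rw [add_comm, singleton_add],
    fun y hy => ⟨e, mem_singleton_self e, hY y hy⟩⟩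

theorem card_le [Preorder α] (h : ReplacesPart m A B) : card A ≤ card B + m := by
  obtain ⟨e, Z, Y, rfl, rfl, hYm, -⟩ := h
  simp only [card_add, card_cons]
  omega

theorem le_sup [SemilatticeSup α] [OrderBot α] (h : ReplacesPart m A B) :
    ∀ x ∈ A, x ≤ B.sup := by
  obtain ⟨e, Z, Y, rfl, rfl, -, hY⟩ := h
  intro x hx
  rcases mem_add.mp hx with hZ | hY'
  · exact Multiset.le_sup (mem_cons_of_mem hZ)
  · exact (hY x hY').le.trans (Multiset.le_sup (mem_cons_self e Z))

end ReplacesPart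

end Multiset

namespace MultiDegree

variable (E : MultiDegree)

def degs : Multiset ℕ := Finset.univ.val.map E.d

@[simp] theorem card_degs : Multiset.card E.degs = E.len := by simp [degs]

theorem d_mem_degs (i : Fin E.len) : E.d i ∈ E.degs :=
  Multiset.mem_map_of_mem _ (Finset.mem_univ i)

theorem pos_of_mem_degs {x : ℕ} (hx : x ∈ E.degs) : 0 < x := by
  obtain ⟨i, -, rfl⟩ := Multiset.mem_map.mp hx
  exact E.pos i

theorem toFun_of_lt {j : ℕ} (hj : j < E.len) : E.toFun j = E.d ⟨j, hj⟩ := dif_pos hj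

theorem toFun_of_le {j : ℕ} (hj : E.len ≤ j) : E.toFun j = 0 := dif_neg (not_lt.mpr hj)

theorem toFun_pos_iff {j : ℕ} : 0 < E.toFun j ↔ j < E.len := by
  refine ⟨fun h => not_le.mp fun hj => ?_, fun hj => ?_⟩
  · rw [E.toFun_of_le hj] at h
    exact h.false
  · rw [E.toFun_of_lt hj]
    exact E.pos _

theorem antitone_toFun : Antitone E.toFun := by
  intro i j hij
  rcases lt_or_ge j E.len with hj | hj
  · rw [E.toFun_of_lt hj, E.toFun_of_lt (hij.trans_lt hj)]
    exact E.anti hij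
  · rw [E.toFun_of_le hj]
    exact Nat.zero_le _

theorem toFun_injective : Function.Injective toFun := by
  intro A B h
  have hlen : A.len = B.len :=
    eq_of_forall_lt_iff fun j => by rw [← A.toFun_pos_iff, ← B.toFun_pos_iff, h]
  obtain ⟨l, dA, _, _⟩ := A
  obtain ⟨l', dB, _, _⟩ := B
  obtain rfl : l = l' := hlen
  obtain rfl : dA = dB := funext fun i => by
    simpa [toFun, i.isLt] using congrFun h i
  rfl

theorem degs_eq_map_range : E.degs = (Multiset.range E.len).map E.toFun := by
  rw [degs, Fin.univ_val_map, List.ofFn_eq_map, Multiset.range, Multiset.map_coe,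
    ← List.map_coe_finRange_eq_range, List.map_map]
  congr 2
  funext i
  exact (E.toFun_of_lt i.isLt).symm

theorem lt_countP_degs_iff {v : ℕ} (hv : 0 < v) (j : ℕ) :
    j < E.degs.countP (v ≤ ·) ↔ v ≤ E.toFun j := by
  rw [degs_eq_map_range, Multiset.countP_map]
  exact Nat.lt_card_filter_range_iff (fun a b hab h => h.trans (E.antitone_toFun hab))
    (fun i hi => E.toFun_pos_iff.mp (hv.trans_le hi)) j

theorem le_of_countP_degs {A B : MultiDegree} {e : ℕ} (he : 0 < e)
    (hgt : ∀ v, e < v → A.degs.countP (v ≤ ·) = B.degs.countP (v ≤ ·))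
    (hlt : A.degs.countP (e ≤ ·) < B.degs.countP (e ≤ ·)) : A.le B := by
  -- The sorted tuples agree below index `#{x ∈ A.degs | e ≤ x}`, where `B` is `≥ e` and `A` is not.
  refine Or.inr ⟨A.degs.countP (e ≤ ·), fun j hj => eq_of_forall_le_iff fun v => ?_, ?_⟩
  · rcases le_or_gt v e with hve | hev
    · exact iff_of_true (hve.trans ((A.lt_countP_degs_iff he j).mp hj))
        (hve.trans ((B.lt_countP_degs_iff he j).mp (hj.trans hlt)))
    · rw [← A.lt_countP_degs_iff (he.trans hev), ← B.lt_countP_degs_iff (he.trans hev),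
        hgt v hev]
  · have hA := (A.lt_countP_degs_iff he _).not.mp (lt_irrefl _)
    have hB := (B.lt_countP_degs_iff he _).mp hlt
    omega

theorem le_of_replacesPart {A B : MultiDegree} {m : ℕ}
    (h : A.degs.ReplacesPart m B.degs) : A.le B := by
  obtain ⟨e, Z, Y, hB, hA, -, hY⟩ := h
  have hY₀ : ∀ v, e ≤ v → Y.countP (v ≤ ·) = 0 := fun v hv =>
    Multiset.countP_eq_zero.mpr fun y hy hvy => (hY y hy).not_ge (hv.trans hvy)
  refine le_of_countP_degs (B.pos_of_mem_degs (hB ▸ Multiset.mem_cons_self e Z))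
    (fun v hev => ?_) ?_
  · rw [hA, hB, Multiset.countP_add, Multiset.countP_cons, hY₀ v hev.le, if_neg hev.not_ge]
  · rw [hA, hB, Multiset.countP_add, Multiset.countP_cons, hY₀ e le_rfl, if_pos le_rfl]
    omega

theorem le_iff_toLex_le {A B : MultiDegree} : A.le B ↔ toLex A.toFun ≤ toLex B.toFun := by
  rw [le_iff_eq_or_lt, toLex_inj]
  rfl

theorem le.trans {A B C : MultiDegree} (hAB : A.le B) (hBC : B.le C) : A.le C :=
  le_iff_toLex_le.mpr ((le_iff_toLex_le.mp hAB).trans (le_iff_toLex_le.mp hBC))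

theorem finite_setOf_len_le (L M : ℕ) :
    {E : MultiDegree | E.len ≤ L ∧ ∀ i, E.d i ≤ M}.Finite := by
  refine Set.Finite.of_finite_image (f := fun E (j : Fin L) => E.toFun j)
    ((Set.Finite.pi (t := fun _ => Set.Iic M) fun _ => Set.finite_Iic M).subset ?_) ?_
  · rintro _ ⟨E, ⟨-, hM⟩, rfl⟩ j -
    rcases lt_or_ge (j : ℕ) E.len with hj | hj
    · simpa [E.toFun_of_lt hj] using hM _
    · simp [E.toFun_of_le hj]
  · intro A hA B hB h
    refine toFun_injective (funext fun j => ?_)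
    rcases lt_or_ge j L with hj | hj
    · exact congrFun h ⟨j, hj⟩
    · rw [A.toFun_of_le (hA.1.trans hj), B.toFun_of_le (hB.1.trans hj)]

theorem finite_setOf_replacesPart (m : ℕ) (B : Multiset ℕ) :
    {E : MultiDegree | E.degs.ReplacesPart m B}.Finite :=
  (finite_setOf_len_le (Multiset.card B + m) B.sup).subset fun E hE =>
    ⟨E.card_degs ▸ hE.card_le, fun i => hE.le_sup _ (E.d_mem_degs i)⟩

theorem exists_degs_eq_map {ι : Type*} [Fintype ι] (w : ι → ℕ) (hw : ∀ i, 0 < w i) :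
    ∃ (E : MultiDegree) (π : Fin E.len ≃ ι), E.d = w ∘ π ∧
      E.degs = Finset.univ.val.map w := by
  let ε := (Fintype.equivFin ι).symm
  let σ := Fin.revPerm.trans (Tuple.sort (w ∘ ε))
  refine ⟨⟨_, w ∘ ε ∘ σ, fun i j hij => Tuple.monotone_sort (w ∘ ε) (Fin.rev_le_rev.mpr hij),
    fun i => hw _⟩, σ.trans ε, rfl, ?_⟩
  rw [degs, ← Multiset.map_map, ← Multiset.map_map, Multiset.map_univ_val_equiv,
    Multiset.map_univ_val_equiv]

end MultiDegree

section Strength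

variable {σ k : Type*} [Field k]

theorem exists_hasStrengthDecomp_of_strength_le {f : MvPolynomial σ k} {d t : ℕ}
    (h : strength f d ≤ t) : ∃ m ≤ t, HasStrengthDecomp f d m := by
  obtain ⟨_, ⟨m, rfl, hm⟩, hmt⟩ := ENat.exists_mem_le_of_sInf_le h
  exact ⟨m, by exact_mod_cast hmt, hm⟩

theorem exists_strength_sum_le_of_tupleStrength_le {r : ℕ} {f : Fin r → MvPolynomial σ k}
    {d : Fin r → ℕ} {t : ℕ} (h : tupleStrength f d ≤ t) :
    ∃ (c : Fin r → k) (e : ℕ), c ≠ 0 ∧ (∀ i, c i ≠ 0 → d i = e) ∧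
      strength (∑ i, C (c i) * f i) e ≤ t := by
  obtain ⟨_, ⟨c, e, hc, hce, rfl⟩, hct⟩ := ENat.exists_mem_le_of_sInf_le h
  exact ⟨c, e, hc, hce, hct⟩

theorem exists_replacesPart_of_tupleStrength_le {D : MultiDegree}
    {f : Fin D.len → MvPolynomial σ k} (hf : ∀ i, (f i).IsHomogeneous (D.d i)) {t : ℕ}
    (ht : tupleStrength f D.d ≤ t) :
    ∃ (E : MultiDegree) (g : Fin E.len → MvPolynomial σ k),
      E.degs.ReplacesPart (2 * t) D.degs ∧ (∀ j, (g j).IsHomogeneous (E.d j)) ∧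
      ∀ i, f i ∈ Algebra.adjoin k (Set.range g) := by
  classical
  obtain ⟨c, e, hc, hce, hct⟩ := exists_strength_sum_le_of_tupleStrength_le ht
  obtain ⟨m, hmt, G, H, a, b, hGH, hsum⟩ := exists_hasStrengthDecomp_of_strength_le hct
  obtain ⟨i₀, hi₀⟩ := Function.ne_iff.mp hc
  let w : {i // i ≠ i₀} ⊕ (Fin m ⊕ Fin m) → ℕ := Sum.elim (fun i => D.d i) (Sum.elim a b)
  let p : {i // i ≠ i₀} ⊕ (Fin m ⊕ Fin m) → MvPolynomial σ k :=
    Sum.elim (fun i => f i) (Sum.elim G H)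
  have hw : ∀ x, 0 < w x := by
    rintro (i | j | j)
    exacts [D.pos i, (hGH j).1, (hGH j).2.2.1]
  have hp : ∀ x, (p x).IsHomogeneous (w x) := by
    rintro (i | j | j)
    exacts [hf i, (hGH j).2.2.2.2.1, (hGH j).2.2.2.2.2]
  obtain ⟨E, π, hEd, hEdegs⟩ := MultiDegree.exists_degs_eq_map w hw
  have hpE : ∀ x, p x ∈ Algebra.adjoin k (Set.range (p ∘ π)) := fun x =>
    Algebra.subset_adjoin ⟨π.symm x, by simp⟩
  refine ⟨E, p ∘ π, ⟨e, Finset.univ.val.map (fun i : {i // i ≠ i₀} => D.d i),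
    Finset.univ.val.map a + Finset.univ.val.map b, ?_, ?_, ?_, ?_⟩, fun j => ?_, fun i => ?_⟩
  · rw [MultiDegree.degs, Finset.univ_val_map_eq_cons _ i₀, hce i₀ hi₀]
  · rw [hEdegs, Finset.univ_val_map_sum, Finset.univ_val_map_sum]
    rfl
  · simp only [Multiset.card_add, Multiset.card_map, Finset.card_val, Finset.card_univ,
      Fintype.card_fin]
    omega
  · simp only [Multiset.mem_add, Multiset.mem_map, Finset.mem_val, Finset.mem_univ, true_and]
    rintro _ (⟨j, rfl⟩ | ⟨j, rfl⟩)
    exacts [(hGH j).2.1, (hGH j).2.2.2.1]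
  · rw [hEd]
    exact hp (π j)
  · by_cases hi : i = i₀
    · subst hi
      refine Submodule.mem_of_sum_smul_mem (v := f)
        (Subalgebra.toSubmodule (Algebra.adjoin k (Set.range (p ∘ π)))) hi₀ ?_
        fun i hi => hpE (.inl ⟨i, hi⟩)
      simp_rw [Subalgebra.mem_toSubmodule, ← C_mul', hsum]
      exact Subalgebra.sum_mem _ fun j _ =>
        Subalgebra.mul_mem _ (hpE (.inr (.inl j))) (hpE (.inr (.inr j)))
    · exact hpE (.inl ⟨i, hi⟩)

end Strength

def RegularizationBound (k : Type*) [Field k] (Φ : MultiDegree → ℕ) (D : MultiDegree)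
    (s : ℕ) : Prop :=
  ∀ (n : ℕ) (f : Fin D.len → MvPolynomial (Fin n) k),
    (∀ i, (f i).IsHomogeneous (D.d i)) →
    ∃ (E : MultiDegree) (g : Fin E.len → MvPolynomial (Fin n) k),
      MultiDegree.le E D ∧ E.len ≤ s ∧
      (∀ j, (g j).IsHomogeneous (E.d j)) ∧
      (Φ E : ℕ∞) < tupleStrength g E.d ∧
      ∀ i, f i ∈ Algebra.adjoin k (Set.range g)

theorem RegularizationBound.mono {k : Type*} [Field k] {Φ : MultiDegree → ℕ} {D : MultiDegree}
    {s s' : ℕ} (h : RegularizationBound k Φ D s) (hss' : s ≤ s') :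
    RegularizationBound k Φ D s' := fun n f hf => by
  obtain ⟨E, g, hED, hlen, hg, hstr, hadj⟩ := h n f hf
  exact ⟨E, g, hED, hlen.trans hss', hg, hstr, hadj⟩

theorem exists_regularizationBound (k : Type*) [Field k] (Φ : MultiDegree → ℕ)
    (D : MultiDegree) : ∃ s, RegularizationBound k Φ D s := by
  induction D using (InvImage.wf MultiDegree.degs
    Multiset.wellFounded_isDershowitzMannaLT).induction with
  | _ D ih =>
  let S := {E : MultiDegree | E.degs.ReplacesPart (2 * Φ D) D.degs}
  choose! bound hbound using fun E (hE : E ∈ S) => ih E hE.isDershowitzMannaLT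
  obtain ⟨s₀, hs₀⟩ := ((MultiDegree.finite_setOf_replacesPart _ _).image bound).bddAbove
  refine ⟨max D.len s₀, fun n f hf => ?_⟩
  by_cases hreg : (Φ D : ℕ∞) < tupleStrength f D.d
  · exact ⟨D, f, Or.inl rfl, le_max_left _ _, hf, hreg, fun i => Algebra.subset_adjoin ⟨i, rfl⟩⟩
  obtain ⟨E', g', hE', hg', hfg'⟩ :=
    exists_replacesPart_of_tupleStrength_le hf (not_lt.mp hreg)
  obtain ⟨E, g, hEE', hlen, hg, hstr, hadj⟩ :=
    (hbound E' hE').mono ((hs₀ ⟨E', hE', rfl⟩).trans (le_max_right _ _)) n g' hg'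
  exact ⟨E, g, hEE'.trans (MultiDegree.le_of_replacesPart hE'), hlen, hg, hstr,
    fun i => Algebra.adjoin_le (Set.range_subset_iff.mpr hadj) (hfg' i)⟩

theorem regularization_general (k : Type*) [Field k]
    (D : MultiDegree) (Φ : MultiDegree → ℕ) :
    ∃ s : ℕ, ∀ (n : ℕ) (f : Fin D.len → MvPolynomial (Fin n) k),
      (∀ i, (f i).IsHomogeneous (D.d i)) →
      ∃ (E : MultiDegree) (g : Fin E.len → MvPolynomial (Fin n) k),
        MultiDegree.le E D ∧ E.len ≤ s ∧
        (∀ j, (g j).IsHomogeneous (E.d j)) ∧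
        (Φ E : ℕ∞) < tupleStrength g E.d ∧
        ∀ i, f i ∈ Algebra.adjoin k (Set.range g) :=
  exists_regularizationBound k Φ D

/-- **Regularization.** For a fixed multi-degree `D` and any function `Φ` on
multi-degrees, there exists `s` such that: any tuple `f` of homogeneous polynomials of
multi-degree `D` (in any number of variables) is contained in the `k`-subalgebra generated
by a tuple `g` of homogeneous polynomials whose multi-degree `E ≤ D` has length at most
`s` and whose strength exceeds `Φ(E)`. -/
theorem regularization (k : Type*) [Field k] [Infinite k]
    (D : MultiDegree) (Φ : MultiDegree → ℕ) :
    ∃ s : ℕ, ∀ (n : ℕ) (f : Fin D.len → MvPolynomial (Fin n) k),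
      (∀ i, (f i).IsHomogeneous (D.d i)) →
      ∃ (E : MultiDegree) (g : Fin E.len → MvPolynomial (Fin n) k),
        MultiDegree.le E D ∧ E.len ≤ s ∧
        (∀ j, (g j).IsHomogeneous (E.d j)) ∧
        (Φ E : ℕ∞) < tupleStrength g E.d ∧
        ∀ i, f i ∈ Algebra.adjoin k (Set.range g) :=
  regularization_general k D Φ
end

section
/- Let k be a field, let d_1 ≥ ... ≥ d_r ≥ 1 be integers, let a_1, ..., a_r ∈ k, let b_1, ..., b_r ∈ k be nonzero, and for each i ∈ {1, ..., r} let h_i be a polynomial in the variables x_{i+1}, y_{i+1}, z_{i+1}, ..., x_r, y_r, z_r, w_1, ..., w_m. Then the polynomials f_i = x_i y_i^{d_i−1} + a_i y_i^{d_i} + b_i z_i^{d_i} + h_i, for i = 1, ..., r, form a prime sequence in the polynomial ring k[x_1, y_1, z_1, ..., x_r, y_r, z_r, w_1, ..., w_m]. -/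
/-!
Peel the blocks off from the left. Write the ring as `A[x_t, y_t, z_t]`, where `A` is the
polynomial ring in all the other variables; every `f_j` with `j > t` lies in `A`. For a prime
`q` of `A`, the ideal `(f_t) + q[x_t, y_t, z_t]` is prime and contracts to `q`: over the domain
`A/q`, `b⁻¹ f_t = z^d + c` with `c = b⁻¹ (x y^{d-1} + a y^d + h)` of degree one in `x` over
the field `Frac((A/q)[y])`, so `c` is prime there and Eisenstein makes `z^d + c` irreducible;
being monic, it stays prime over `(A/q)[x, y]`. Inserting indices one at a time, smallest first,
makes every `(f_1, …, f_i)` prime, and the contraction statement keeps `f_{i+1}` out of it.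
-/

open MvPolynomial

def IsPrimeSequence {R : Type*} [CommRing R] {r : ℕ} (f : Fin r → R) : Prop :=
  (∀ i : Fin r, (Ideal.span (f '' {j | j ≤ i})).IsPrime) ∧
    ∀ i j : Fin r, i < j →
      Ideal.span (f '' {j' | j' ≤ i}) < Ideal.span (f '' {j' | j' ≤ j})

namespace Polynomial

theorem irreducible_X_pow_add_C_of_prime {R : Type*} [CommRing R] [IsDomain R] {π : R}
    (hπ : Prime π) {d : ℕ} (hd : 0 < d) : Irreducible (X ^ d + C π : R[X]) := by
  have hmonic : (X ^ d + C π : R[X]).Monic := monic_X_pow_add_C π hd.ne'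
  have hdeg : (X ^ d + C π : R[X]).natDegree = d := natDegree_X_pow_add_C
  refine IsEisensteinAt.irreducible (𝓟 := Ideal.span {π}) ⟨?_, fun {n} hn => ?_, ?_⟩
    ((Ideal.span_singleton_prime hπ.ne_zero).mpr hπ) hmonic.isPrimitive (by rw [hdeg]; exact hd)
  · rw [hmonic.leadingCoeff, Ideal.mem_span_singleton]
    exact hπ.not_dvd_one
  · rw [hdeg] at hn
    rw [coeff_add, coeff_X_pow, if_neg hn.ne, zero_add, coeff_C]
    split_ifs
    exacts [Ideal.mem_span_singleton_self π, zero_mem _]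
  · rw [coeff_add, coeff_X_pow, if_neg hd.ne, coeff_C_zero, zero_add,
      Ideal.span_singleton_pow, Ideal.mem_span_singleton, pow_two]
    -- `π * π ∣ π * 1` would make `π` a unit
    intro h
    exact hπ.not_dvd_one ((mul_dvd_mul_iff_left hπ.ne_zero).mp (by simpa using h))

theorem Monic.prime_of_prime_map {R S : Type*} [CommRing R] [CommRing S] {g : R[X]}
    (hg : g.Monic) {φ : R →+* S} (hφ : Function.Injective φ) (h : Prime (g.map φ)) :
    Prime g := by
  refine ⟨fun h0 => h.ne_zero (by rw [h0, Polynomial.map_zero]),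
    fun hu => h.not_isUnit (hu.map (mapRingHom φ)), fun p q hpq => ?_⟩
  rw [← map_dvd_map φ hφ hg, ← map_dvd_map φ hφ hg]
  exact h.dvd_or_dvd (by rw [← Polynomial.map_mul]; exact Polynomial.map_dvd φ hpq)

theorem prime_X_pow_add_C_of_degree_map_eq_one {B K : Type*} [CommRing B] [Field K]
    {φ : B →+* K[X]} (hφ : Function.Injective φ) {c : B} (hc : (φ c).degree = 1)
    {d : ℕ} (hd : 0 < d) : Prime (X ^ d + C c : B[X]) := by
  have hprime : Prime (φ c) := (irreducible_of_degree_eq_one hc).prime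
  refine (monic_X_pow_add_C c hd.ne').prime_of_prime_map hφ ?_
  rw [Polynomial.map_add, Polynomial.map_pow, map_X, map_C]
  exact (irreducible_X_pow_add_C_of_prime hprime hd).prime

end Polynomial

namespace MvPolynomial

theorem finSuccEquiv_C {R : Type*} [CommSemiring R] {n : ℕ} (t : R) :
    finSuccEquiv R n (C t) = Polynomial.C (C t) := by
  simp [finSuccEquiv_apply]

theorem comap_C_map_C {R σ : Type*} [CommRing R] (q : Ideal R) :
    (q.map (C : R →+* MvPolynomial σ R)).comap C = q := by
  classical
  ext t
  rw [Ideal.mem_comap, mem_map_C_iff]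
  refine ⟨fun ht => by simpa using ht 0, fun ht m => ?_⟩
  rw [coeff_C]
  split_ifs
  exacts [ht, zero_mem q]

theorem rename_mem_supported {R σ τ : Type*} [CommSemiring R] {f : τ → σ} {S : Set σ}
    (hf : ∀ x, f x ∈ S) (p : MvPolynomial τ R) : rename f p ∈ supported R S := by
  rw [supported_eq_range_rename]
  exact (AlgHom.mem_range _).mpr
    ⟨rename (fun x => ⟨f x, hf x⟩) p, by rw [rename_rename]; rfl⟩

variable (D : Type*) [CommRing D] (n : ℕ)

noncomputable def finSuccToFractionPolynomial :
    MvPolynomial (Fin (n + 1)) D →+* Polynomial (FractionRing (MvPolynomial (Fin n) D)) :=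
  (Polynomial.mapRingHom (algebraMap _ _)).comp (finSuccEquiv D n).toRingEquiv.toRingHom

theorem finSuccToFractionPolynomial_injective :
    Function.Injective (finSuccToFractionPolynomial D n) :=
  (Polynomial.map_injective _ (IsFractionRing.injective _ _)).comp (finSuccEquiv D n).injective

variable {D n}

theorem finSuccToFractionPolynomial_C (t : D) :
    finSuccToFractionPolynomial D n (C t) =
      Polynomial.C (algebraMap (MvPolynomial (Fin n) D) _ (C t)) := by
  simp [finSuccToFractionPolynomial, finSuccEquiv_C]

theorem finSuccToFractionPolynomial_X_zero :
    finSuccToFractionPolynomial D n (X 0) = Polynomial.X := by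
  simp [finSuccToFractionPolynomial, finSuccEquiv_X_zero]

theorem finSuccToFractionPolynomial_X_succ (j : Fin n) :
    finSuccToFractionPolynomial D n (X j.succ) =
      Polynomial.C (algebraMap (MvPolynomial (Fin n) D) _ (X j)) := by
  simp [finSuccToFractionPolynomial, finSuccEquiv_X_succ]

end MvPolynomial

section NormalForm

variable {D : Type*} [CommRing D] {d : ℕ}

/-- `X 0`, `X 1`, `X 2` stand for `z`, `x`, `y`, so that `finSuccEquiv` splits off `z` first
and then `x`. -/
noncomputable def normalForm (d : ℕ) (a b h : D) : MvPolynomial (Fin 3) D :=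
  X 1 * X 2 ^ (d - 1) + C a * X 2 ^ d + C b * X 0 ^ d + C h

theorem map_normalForm {D' : Type*} [CommRing D'] (φ : D →+* D') (a b h : D) :
    map φ (normalForm d a b h) = normalForm d (φ a) (φ b) (φ h) := by
  simp [normalForm]

theorem finSuccEquiv_normalForm (a b h : D) :
    finSuccEquiv D 2 (normalForm d a b h) =
      Polynomial.C (C b) * Polynomial.X ^ d
        + Polynomial.C (X 0 * X 1 ^ (d - 1) + C a * X 1 ^ d + C h) := by
  simp only [normalForm, map_add, map_mul, map_pow, finSuccEquiv_C, finSuccEquiv_X_zero,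
    show (1 : Fin 3) = Fin.succ 0 from rfl, show (2 : Fin 3) = Fin.succ 1 from rfl,
    finSuccEquiv_X_succ]
  ring

theorem finSuccEquiv_normalForm_of_unit (a h : D) (u : Dˣ) :
    finSuccEquiv D 2 (normalForm d a u h) = Polynomial.C (C (u : D)) *
      (Polynomial.X ^ d +
        Polynomial.C (C (↑u⁻¹ : D) * (X 0 * X 1 ^ (d - 1) + C a * X 1 ^ d + C h))) := by
  rw [finSuccEquiv_normalForm, mul_add, ← Polynomial.C_mul, ← mul_assoc, ← C_mul,
    Units.mul_inv, C_1, one_mul]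

theorem comap_C_span_normalForm (hd : 0 < d) (a h : D) {b : D} (hb : IsUnit b) :
    (Ideal.span {normalForm d a b h}).comap C = ⊥ := by
  nontriviality D
  obtain ⟨u, rfl⟩ := hb
  refine eq_bot_iff.mpr fun t ht => ?_
  rw [Ideal.mem_comap, Ideal.mem_span_singleton] at ht
  have hdvd := (Dvd.intro_left _ (finSuccEquiv_normalForm_of_unit a h u).symm).trans
    (map_dvd (finSuccEquiv D 2) ht)
  rw [finSuccEquiv_C] at hdvd
  by_contra ht0
  refine (Polynomial.monic_X_pow_add_C _ hd.ne').not_dvd_of_natDegree_lt ?_ ?_ hdvd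
  · simpa using ht0
  · rwa [Polynomial.natDegree_C, Polynomial.natDegree_X_pow_add_C]

theorem prime_normalForm [IsDomain D] (hd : 0 < d) (a h : D) {b : D} (hb : IsUnit b) :
    Prime (normalForm d a b h) := by
  obtain ⟨u, rfl⟩ := hb
  set c : MvPolynomial (Fin 2) D := C (↑u⁻¹ : D) * (X 0 * X 1 ^ (d - 1) + C a * X 1 ^ d + C h)
  set κ := algebraMap (MvPolynomial (Fin 1) D) (FractionRing (MvPolynomial (Fin 1) D))
  have hκ : Function.Injective κ := IsFractionRing.injective _ _
  have hlinear : finSuccToFractionPolynomial D 1 c =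
      Polynomial.C (κ (C (↑u⁻¹ : D)) * κ (X 0) ^ (d - 1)) * Polynomial.X +
        Polynomial.C (κ (C (↑u⁻¹ : D)) * (κ (C a) * κ (X 0) ^ d + κ (C h))) := by
    simp only [c, map_add, map_mul, map_pow, finSuccToFractionPolynomial_C,
      finSuccToFractionPolynomial_X_zero, ← Fin.succ_zero_eq_one,
      finSuccToFractionPolynomial_X_succ]
    ring
  have hdeg : (finSuccToFractionPolynomial D 1 c).degree = 1 := by
    rw [hlinear]
    refine Polynomial.degree_linear (mul_ne_zero ?_ (pow_ne_zero _ ?_))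
    · exact (map_ne_zero_iff κ hκ).mpr ((map_ne_zero_iff _ (C_injective _ _)).mpr u⁻¹.ne_zero)
    · exact (map_ne_zero_iff κ hκ).mpr (X_ne_zero 0)
  have hprime := Polynomial.prime_X_pow_add_C_of_degree_map_eq_one
    (finSuccToFractionPolynomial_injective D 1) hdeg hd
  have himage : Prime (finSuccEquiv D 2 (normalForm d a u h)) := by
    rw [finSuccEquiv_normalForm_of_unit]
    exact (associated_unit_mul_left _ _ ((u.isUnit.map C).map Polynomial.C)).symm.prime hprime
  exact (MulEquiv.prime_iff (finSuccEquiv D 2)).mp himage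

variable {A : Type*} [CommRing A]

theorem span_normalForm_sup_map_C (q : Ideal A) (a b h : A) :
    Ideal.span {normalForm d a b h} ⊔ q.map C =
      (Ideal.span {normalForm d (Ideal.Quotient.mk q a) (Ideal.Quotient.mk q b)
        (Ideal.Quotient.mk q h)}).comap (map (Ideal.Quotient.mk q)) := by
  rw [← map_normalForm, ← Set.image_singleton (f := map (Ideal.Quotient.mk q)),
    ← Ideal.map_span, Ideal.comap_map_of_surjective (map (Ideal.Quotient.mk q))
      (map_surjective _ Ideal.Quotient.mk_surjective), ← RingHom.ker_eq_comap_bot, ker_map,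
    Ideal.mk_ker]

theorem isPrime_span_normalForm_sup_map_C (q : Ideal A) [q.IsPrime] (hd : 0 < d) (a h : A)
    {b : A} (hb : IsUnit b) : (Ideal.span {normalForm d a b h} ⊔ q.map C).IsPrime := by
  have hprime := prime_normalForm hd (Ideal.Quotient.mk q a) (Ideal.Quotient.mk q h)
    (hb.map (Ideal.Quotient.mk q))
  have := (Ideal.span_singleton_prime hprime.ne_zero).mpr hprime
  rw [span_normalForm_sup_map_C]
  exact Ideal.IsPrime.comap _

theorem comap_C_span_normalForm_sup_map_C (q : Ideal A) (hd : 0 < d) (a h : A) {b : A}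
    (hb : IsUnit b) : (Ideal.span {normalForm d a b h} ⊔ q.map C).comap C = q := by
  rw [span_normalForm_sup_map_C, Ideal.comap_comap, map_comp_C, ← Ideal.comap_comap,
    comap_C_span_normalForm hd _ _ (hb.map _), ← RingHom.ker_eq_comap_bot, Ideal.mk_ker]

end NormalForm

theorem isPrime_span_insert_of_ringEquiv {R A : Type*} [CommRing R] [CommRing A]
    (e : R ≃+* MvPolynomial (Fin 3) A) {d : ℕ} (hd : 0 < d) {a b h : A} (hb : IsUnit b)
    {f : R} (hf : e f = normalForm d a b h) {S : Set R} (hSC : ∀ g ∈ S, e g ∈ Set.range C)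
    (hS : (Ideal.span S).IsPrime) :
    (Ideal.span (insert f S)).IsPrime ∧
      ∀ g, e g ∈ Set.range C → g ∈ Ideal.span (insert f S) → g ∈ Ideal.span S := by
  set T : Set A := C ⁻¹' (e '' S)
  have hmapS : (Ideal.span S).map e = (Ideal.span T).map C := by
    rw [Ideal.map_span, Ideal.map_span, Set.image_preimage_eq_of_subset]
    rintro _ ⟨g, hg, rfl⟩
    exact hSC g hg
  have hmapInsert : (Ideal.span (insert f S)).map e =
      Ideal.span {normalForm d a b h} ⊔ (Ideal.span T).map C := by
    rw [Ideal.map_span, Set.image_insert_eq, Ideal.span_insert, ← Ideal.map_span, hmapS, hf]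
  have hT : (Ideal.span T).IsPrime := by
    have := Ideal.map_isPrime_of_equiv e (I := Ideal.span S)
    rw [← comap_C_map_C (σ := Fin 3) (Ideal.span T), ← hmapS]
    exact Ideal.IsPrime.comap _
  constructor
  · rw [← Ideal.comap_map_of_bijective e e.bijective (I := Ideal.span (insert f S)), hmapInsert]
    have := isPrime_span_normalForm_sup_map_C (Ideal.span T) hd a h hb
    exact Ideal.IsPrime.comap _
  · rintro g ⟨G, hG⟩ hg
    rw [← Ideal.apply_mem_of_equiv_iff (f := e), hmapS, ← hG]
    rw [← Ideal.apply_mem_of_equiv_iff (f := e), hmapInsert, ← hG, ← Ideal.mem_comap,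
      comap_C_span_normalForm_sup_map_C _ hd _ _ hb] at hg
    exact Ideal.mem_map_of_mem C hg

theorem isPrimeSequence_of_span_insert {R : Type*} [CommRing R] [IsDomain R] {r : ℕ}
    (f : Fin r → R) (hf : ∀ i, f i ≠ 0)
    (hstep : ∀ (t : Fin r) (s : Finset (Fin r)), (∀ j ∈ s, t < j) →
      (Ideal.span (f '' s)).IsPrime →
        (Ideal.span (f '' ↑(insert t s))).IsPrime ∧
          ∀ j, t < j → f j ∈ Ideal.span (f '' ↑(insert t s)) → f j ∈ Ideal.span (f '' s)) :
    IsPrimeSequence f := by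
  have key (s : Finset (Fin r)) : (Ideal.span (f '' s)).IsPrime ∧
      ∀ j, (∀ i ∈ s, i < j) → f j ∉ Ideal.span (f '' s) := by
    induction s using Finset.induction_on_min with
    | empty => simpa using ⟨Ideal.isPrime_bot, hf⟩
    | insert t s hts ih =>
      obtain ⟨hprime, hmem⟩ := hstep t s hts ih.1
      refine ⟨hprime, fun j hj hfj => ?_⟩
      exact ih.2 j (fun i hi => hj i (Finset.mem_insert_of_mem hi))
        (hmem j (hj t (Finset.mem_insert_self t s)) hfj)
  refine ⟨fun i => by simpa [Set.Iic] using (key (Finset.Iic i)).1, fun i j hij => ?_⟩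
  refine lt_of_le_of_ne (Ideal.span_mono (Set.image_mono fun x hx => le_trans hx hij.le)) ?_
  intro heq
  refine (key (Finset.Iic i)).2 j (fun x hx => lt_of_le_of_lt (Finset.mem_Iic.mp hx) hij) ?_
  simpa [Set.Iic, heq] using
    Ideal.subset_span (s := f '' {j' | j' ≤ j}) ⟨j, le_refl j, rfl⟩

section Block

variable {r m : ℕ}

/-- `finRotate 3` sends the block `(x_t, y_t, z_t)` to `(X 1, X 2, X 0)`, as in `normalForm`. -/
def blockEquiv (t : Fin r) :
    (Fin r × Fin 3) ⊕ Fin m ≃ Fin 3 ⊕ (({p : Fin r // p ≠ t} × Fin 3) ⊕ Fin m) where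
  toFun
    | .inl (p, s) => if hp : p = t then .inl (finRotate 3 s) else .inr (.inl (⟨p, hp⟩, s))
    | .inr w => .inr (.inr w)
  invFun
    | .inl s => .inl (t, (finRotate 3).symm s)
    | .inr (.inl (p, s)) => .inl (p.1, s)
    | .inr (.inr w) => .inr w
  left_inv := by
    rintro (⟨p, s⟩ | w)
    · by_cases hp : p = t
      · subst hp; simp
      · simp [hp]
    · rfl
  right_inv := by
    rintro (s | ⟨⟨p, hp⟩, s⟩ | w)
    · simp
    · simp [hp]
    · rfl

def blockCompl (t : Fin r) : Set ((Fin r × Fin 3) ⊕ Fin m) := {v | ∀ s, v ≠ .inl (t, s)}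

variable (k : Type*) [CommRing k]

noncomputable def blockAlgEquiv (t : Fin r) :
    MvPolynomial ((Fin r × Fin 3) ⊕ Fin m) k ≃ₐ[k]
      MvPolynomial (Fin 3) (MvPolynomial (({p : Fin r // p ≠ t} × Fin 3) ⊕ Fin m) k) :=
  (renameEquiv k (blockEquiv t)).trans (sumAlgEquiv k _ _)

variable {k}

theorem blockAlgEquiv_X_self (t : Fin r) (s : Fin 3) :
    blockAlgEquiv (m := m) k t (X (.inl (t, s))) = X (finRotate 3 s) := by
  simp [blockAlgEquiv, blockEquiv, sumAlgEquiv_X_inl]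

theorem blockAlgEquiv_C (t : Fin r) (x : k) :
    blockAlgEquiv (m := m) k t (C x) = C (C x) := by
  rw [← algebraMap_eq, AlgEquiv.commutes]
  rfl

theorem blockAlgEquiv_mem_range_C {t : Fin r} {p : MvPolynomial ((Fin r × Fin 3) ⊕ Fin m) k}
    (hp : p ∈ supported k (blockCompl t)) :
    blockAlgEquiv k t p ∈ Set.range C := by
  induction hp using Algebra.adjoin_induction with
  | mem x hx =>
    obtain ⟨v, hv, rfl⟩ := hx
    obtain ⟨w, hw⟩ : ∃ w, blockEquiv t v = .inr w := by
      rcases v with ⟨p, s⟩ | w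
      · exact ⟨_, dif_neg fun hp => hv s (by rw [hp])⟩
      · exact ⟨_, rfl⟩
    exact ⟨X w, by simp [blockAlgEquiv, hw, sumAlgEquiv_X_inr]⟩
  | algebraMap x => exact ⟨C x, (blockAlgEquiv_C t x).symm⟩
  | add x y _ _ hx hy =>
    obtain ⟨G, hG⟩ := hx
    obtain ⟨G', hG'⟩ := hy
    exact ⟨G + G', by rw [map_add, map_add, hG, hG']⟩
  | mul x y _ _ hx hy =>
    obtain ⟨G, hG⟩ := hx
    obtain ⟨G', hG'⟩ := hy
    exact ⟨G * G', by rw [map_mul, map_mul, hG, hG']⟩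

end Block

section Family

variable {k : Type*} [CommRing k] {r m : ℕ}

noncomputable def normalFormFamily (d : Fin r → ℕ) (a b : Fin r → k)
    (h : ∀ i : Fin r, MvPolynomial (({p : Fin r // i < p} × Fin 3) ⊕ Fin m) k) (i : Fin r) :
    MvPolynomial ((Fin r × Fin 3) ⊕ Fin m) k :=
  X (Sum.inl (i, 0)) * X (Sum.inl (i, 1)) ^ (d i - 1) + C (a i) * X (Sum.inl (i, 1)) ^ d i
    + C (b i) * X (Sum.inl (i, 2)) ^ d i
    + rename (Sum.map (fun q : {p : Fin r // i < p} × Fin 3 => ((q.1 : Fin r), q.2)) id) (h i)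

theorem rename_mem_supported_blockCompl {t j : Fin r} (htj : t ≤ j)
    (q : MvPolynomial (({p : Fin r // j < p} × Fin 3) ⊕ Fin m) k) :
    rename (Sum.map (fun q : {p : Fin r // j < p} × Fin 3 => ((q.1 : Fin r), q.2)) id) q ∈
      supported k (blockCompl t) := by
  refine rename_mem_supported ?_ q
  rintro (⟨⟨p, hp⟩, s⟩ | w) s' heq
  · simp only [Sum.map_inl, Sum.inl.injEq, Prod.mk.injEq] at heq
    exact (htj.trans_lt hp).ne' heq.1
  · simp at heq

variable (d : Fin r → ℕ) (a b : Fin r → k)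
  (h : ∀ i : Fin r, MvPolynomial (({p : Fin r // i < p} × Fin 3) ⊕ Fin m) k)

theorem normalFormFamily_mem_supported_blockCompl [Nontrivial k] {t j : Fin r} (htj : t < j) :
    normalFormFamily d a b h j ∈ supported k (blockCompl t) := by
  have hX (s : Fin 3) : X (Sum.inl (j, s)) ∈ supported k (blockCompl (m := m) t) :=
    X_mem_supported.mpr fun s' heq => htj.ne' (Sum.inl_injective heq |> congrArg Prod.fst)
  have hC (x : k) : C x ∈ supported k (blockCompl (m := m) t) := Subalgebra.algebraMap_mem _ x
  unfold normalFormFamily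
  exact add_mem (add_mem (add_mem (mul_mem (hX 0) (pow_mem (hX 1) _))
    (mul_mem (hC _) (pow_mem (hX 1) _))) (mul_mem (hC _) (pow_mem (hX 2) _)))
    (rename_mem_supported_blockCompl htj.le (h j))

theorem exists_blockAlgEquiv_normalFormFamily_eq_normalForm (t : Fin r) :
    ∃ H, blockAlgEquiv k t (normalFormFamily d a b h t) =
      normalForm (d t) (C (a t)) (C (b t)) H := by
  obtain ⟨H, hH⟩ := blockAlgEquiv_mem_range_C (rename_mem_supported_blockCompl le_rfl (h t))
  refine ⟨H, ?_⟩
  simp only [normalFormFamily, map_add, map_mul, map_pow, blockAlgEquiv_X_self, blockAlgEquiv_C,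
    ← hH]
  rfl

end Family

/-- Variables are indexed by `(Fin r × Fin 3) ⊕ Fin m`: `inl (i, 0)`, `inl (i, 1)`, `inl (i, 2)`
are `x_i, y_i, z_i` and `inr j` is `w_j`. -/
theorem normal_form_prime_sequence_general (k : Type*) [Field k] (r m : ℕ) (d : Fin r → ℕ)
    (hpos : ∀ i, 1 ≤ d i)
    (a b : Fin r → k) (hb : ∀ i, b i ≠ 0)
    (h : ∀ i : Fin r, MvPolynomial (({ p : Fin r // i < p } × Fin 3) ⊕ Fin m) k) :
    IsPrimeSequence (fun i : Fin r =>
      (X (Sum.inl (i, 0)) * X (Sum.inl (i, 1)) ^ (d i - 1)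
        + C (a i) * X (Sum.inl (i, 1)) ^ (d i)
        + C (b i) * X (Sum.inl (i, 2)) ^ (d i)
        + rename (Sum.map (fun q : { p : Fin r // i < p } × Fin 3 => ((q.1 : Fin r), q.2)) id)
            (h i) :
        MvPolynomial ((Fin r × Fin 3) ⊕ Fin m) k)) := by
  change IsPrimeSequence (normalFormFamily d a b h)
  have hunit (t : Fin r) {σ : Type} : IsUnit (C (b t) : MvPolynomial σ k) := (hb t).isUnit.map C
  refine isPrimeSequence_of_span_insert _ (fun j hj => ?_) (fun t s hts hs => ?_)
  · obtain ⟨H, hH⟩ := exists_blockAlgEquiv_normalFormFamily_eq_normalForm d a b h j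
    refine (prime_normalForm (hpos j) (C (a j)) H (hunit j)).ne_zero ?_
    rw [← hH, hj, map_zero]
  · obtain ⟨H, hH⟩ := exists_blockAlgEquiv_normalFormFamily_eq_normalForm d a b h t
    have hrange {j} (htj : t < j) :
        blockAlgEquiv k t (normalFormFamily d a b h j) ∈ Set.range C :=
      blockAlgEquiv_mem_range_C (normalFormFamily_mem_supported_blockCompl d a b h htj)
    rw [Finset.coe_insert, Set.image_insert_eq]
    obtain ⟨hprime, hmem⟩ := isPrime_span_insert_of_ringEquiv (blockAlgEquiv k t).toRingEquiv
      (hpos t) (hunit t) hH (by rintro _ ⟨j, hj, rfl⟩; exact hrange (hts j hj)) hs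
    exact ⟨hprime, fun j htj => hmem (normalFormFamily d a b h j) (hrange htj)⟩

/-- In `k[x_1,y_1,z_1, …, x_r,y_r,z_r, w_1, …, w_m]` (variables indexed by
`(Fin r × Fin 3) ⊕ Fin m`, where `(i,0), (i,1), (i,2)` are `x_i, y_i, z_i` and `inr j`
is `w_j`), the polynomials
`f_i = x_i y_i^{d_i−1} + a_i y_i^{d_i} + b_i z_i^{d_i} + h_i`, with `b_i ≠ 0` and `h_i`
a polynomial in the variables `x_j, y_j, z_j` (`j > i`) and `w_1, …, w_m`, form a prime
sequence. -/
theorem normal_form_prime_sequence (k : Type*) [Field k] (r m : ℕ) (d : Fin r → ℕ)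
    (hanti : Antitone d) (hpos : ∀ i, 1 ≤ d i)
    (a b : Fin r → k) (hb : ∀ i, b i ≠ 0)
    (h : ∀ i : Fin r, MvPolynomial (({ p : Fin r // i < p } × Fin 3) ⊕ Fin m) k) :
    IsPrimeSequence (fun i : Fin r =>
      (X (Sum.inl (i, 0)) * X (Sum.inl (i, 1)) ^ (d i - 1)
        + C (a i) * X (Sum.inl (i, 1)) ^ (d i)
        + C (b i) * X (Sum.inl (i, 2)) ^ (d i)
        + rename (Sum.map (fun q : { p : Fin r // i < p } × Fin 3 => ((q.1 : Fin r), q.2)) id)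
            (h i) :
        MvPolynomial ((Fin r × Fin 3) ⊕ Fin m) k)) :=
  normal_form_prime_sequence_general k r m d hpos a b hb h
end
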